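/- arXiv:1510.04922 — 2 statements merged into one kernel-verified Lean document; each statement's English description precedes it below -/
import Mathlib

section
/- Let i ≥ 2 and let b_1, …, b_i ∈ k, not all zero. Set s = b_1·y_1 + ⋯ + b_i·y_i in S_i. Then the annihilator ann_{S_i}(s) equals the ideal (y_1, …, y_i) generated by y_1, …, y_i. -/
/-! Modulo `(y₁, …, y_i)` every element of `S_i` is `a + c·x` with `a, c ∈ k`, and
`(y₁, …, y_i)² = 0`, so `r·s = 0` reduces to `(a + c·x)·s = 0`. Choose `j₀` with `b_{j₀} ≠ 0` and map
`S_i` to `k[ε][δ]` (both squares zero) by `x ↦ ε`, `y_{j₀} ↦ δ`, `y_j ↦ 0` otherwise: the relation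
becomes `b_{j₀}·(a + c·ε)·δ = 0`, forcing `a = c = 0`. -/

set_option synthInstance.maxHeartbeats 1000000
set_option maxHeartbeats 1000000

open MvPolynomial

noncomputable section

/-- The defining ideal `(X², (Y₁,…,Y_i)²)` of `S_i` in `k[X,Y₁,…,Y_i]`;
the variable `X 0` plays the role of `X` and `X j.succ` the role of `Y_j`. -/
abbrev SIdeal (k : Type) [Field k] (i : ℕ) : Ideal (MvPolynomial (Fin (i + 1)) k) :=
  Ideal.span ({X 0 ^ 2} ∪ {p | ∃ a b : Fin i, p = X a.succ * X b.succ})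

/-- `S_i = k[X,Y₁,…,Y_i]/(X², (Y₁,…,Y_i)²)`. -/
abbrev Sring (k : Type) [Field k] (i : ℕ) := MvPolynomial (Fin (i + 1)) k ⧸ SIdeal k i

/-- `x`, the residue class of `X` in `S_i`. -/
abbrev xS (k : Type) [Field k] (i : ℕ) : Sring k i := Ideal.Quotient.mk _ (X 0)

/-- `y_j`, the residue class of `Y_j` in `S_i`. -/
abbrev yS (k : Type) [Field k] (i : ℕ) (j : Fin i) : Sring k i :=
  Ideal.Quotient.mk _ (X j.succ)

/-- The maximal ideal `𝔫_i = (x, y₁, …, y_i)` of `S_i`. -/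
abbrev nS (k : Type) [Field k] (i : ℕ) : Ideal (Sring k i) :=
  Ideal.span ({xS k i} ∪ Set.range (yS k i))

namespace Sring

variable {k : Type} [Field k] {i : ℕ}

theorem xS_sq : xS k i ^ 2 = 0 := by
  rw [← map_pow, Ideal.Quotient.eq_zero_iff_mem]
  exact Ideal.subset_span (Or.inl rfl)

theorem yS_mul_yS (a b : Fin i) : yS k i a * yS k i b = 0 := by
  rw [← map_mul, Ideal.Quotient.eq_zero_iff_mem]
  exact Ideal.subset_span (Or.inr ⟨a, b, rfl⟩)

theorem span_yS_mul_self :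
    Ideal.span (Set.range (yS k i)) * Ideal.span (Set.range (yS k i)) = ⊥ := by
  rw [Ideal.span_mul_span', Ideal.span_eq_bot]
  rintro _ ⟨_, ⟨a, rfl⟩, _, ⟨b, rfl⟩, rfl⟩
  exact yS_mul_yS a b

theorem exists_sub_mem_span_yS (r : Sring k i) :
    ∃ a c : k, r - (algebraMap k _ a + algebraMap k _ c * xS k i) ∈
      Ideal.span (Set.range (yS k i)) := by
  obtain ⟨P, rfl⟩ := Ideal.Quotient.mk_surjective r
  induction P using MvPolynomial.induction_on with
  | C a =>
    refine ⟨a, 0, ?_⟩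
    rw [map_zero, zero_mul, add_zero, ← algebraMap_eq, Ideal.Quotient.mk_algebraMap, sub_self]
    exact zero_mem _
  | add P Q hP hQ =>
    obtain ⟨a, c, hP⟩ := hP
    obtain ⟨a', c', hQ⟩ := hQ
    refine ⟨a + a', c + c', ?_⟩
    convert add_mem hP hQ using 1
    simp only [map_add]
    ring
  | mul_X P n hP =>
    obtain ⟨a, c, hP⟩ := hP
    induction n using Fin.cases with
    | zero =>
      refine ⟨0, a, ?_⟩
      convert Ideal.mul_mem_right (xS k i) _ hP using 1
      rw [map_mul, map_zero]
      linear_combination (algebraMap k (Sring k i) c) * xS_sq (k := k) (i := i)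
    | succ j =>
      refine ⟨0, 0, ?_⟩
      simpa using Ideal.mul_mem_left _ (Ideal.Quotient.mk _ P)
        (Ideal.subset_span (Set.mem_range_self j) : yS k i j ∈ Ideal.span (Set.range (yS k i)))

def evalDual (j₀ : Fin i) : Sring k i →ₐ[k] DualNumber (DualNumber k) :=
  Ideal.Quotient.liftₐ _ (aeval (Fin.cons (TrivSqZeroExt.inl DualNumber.eps :
    DualNumber (DualNumber k)) fun j => if j = j₀ then DualNumber.eps else 0)) <| by
    refine fun P hP => (RingHom.mem_ker).1 (Ideal.span_le.2 ?_ hP)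
    rintro _ (rfl | ⟨a, b, rfl⟩) <;> simp only [SetLike.mem_coe, RingHom.mem_ker]
    · rw [map_pow, aeval_X, Fin.cons_zero, TrivSqZeroExt.inl_pow, DualNumber.eps_pow_two,
        TrivSqZeroExt.inl_zero]
    · simp only [map_mul, aeval_X, Fin.cons_succ]
      split_ifs <;> simp [DualNumber.eps_mul_eps]

theorem evalDual_xS (j₀ : Fin i) :
    evalDual j₀ (xS k i) = TrivSqZeroExt.inl DualNumber.eps :=
  (aeval_X _ _).trans (Fin.cons_zero _ _)

theorem evalDual_yS (j₀ j : Fin i) :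
    evalDual j₀ (yS k i j) = if j = j₀ then DualNumber.eps else 0 :=
  (aeval_X _ _).trans (Fin.cons_succ _ _ _)

theorem eq_zero_and_eq_zero_of_mul_sum_yS_eq_zero {b : Fin i → k} {j₀ : Fin i} (hb : b j₀ ≠ 0)
    {a c : k} (h : (algebraMap k _ a + algebraMap k _ c * xS k i) *
      ∑ j, algebraMap k _ (b j) * yS k i j = 0) :
    a = 0 ∧ c = 0 := by
  have h' := congrArg (evalDual j₀) h
  simp only [map_mul, map_add, map_sum, AlgHom.commutes, evalDual_xS, evalDual_yS, mul_ite,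
    mul_zero, Finset.sum_ite_eq', Finset.mem_univ, if_true, map_zero] at h'
  have hδ := congrArg (fun z => z.snd.fst) h'
  have hεδ := congrArg (fun z => z.snd.snd) h'
  simp [TrivSqZeroExt.algebraMap_eq_inl', hb] at hδ hεδ
  exact ⟨hδ, hεδ⟩

end Sring

open Sring in
theorem stmt3_general (k : Type) [Field k] (i : ℕ)
    (b : Fin i → k) (hb : b ≠ 0) (s : Sring k i)
    (hs : s = ∑ j, algebraMap k (Sring k i) (b j) * yS k i j) :
    {r : Sring k i | r * s = 0} = ↑(Ideal.span (Set.range (yS k i))) := by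
  obtain ⟨j₀, hj₀⟩ := Function.ne_iff.mp hb
  have hs_mem : s ∈ Ideal.span (Set.range (yS k i)) := hs ▸
    Ideal.sum_mem _ fun j _ => Ideal.mul_mem_left _ _ (Ideal.subset_span ⟨j, rfl⟩)
  have mul_s_eq_zero (t) (ht : t ∈ Ideal.span (Set.range (yS k i))) : t * s = 0 := by
    simpa [span_yS_mul_self] using Ideal.mul_mem_mul ht hs_mem
  ext r
  refine ⟨fun (hr : r * s = 0) => ?_, mul_s_eq_zero r⟩
  obtain ⟨a, c, hr_sub⟩ := exists_sub_mem_span_yS r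
  have h := mul_s_eq_zero _ hr_sub
  rw [sub_mul, hr, zero_sub, neg_eq_zero, hs] at h
  obtain ⟨rfl, rfl⟩ := eq_zero_and_eq_zero_of_mul_sum_yS_eq_zero hj₀ h
  simpa using hr_sub

/-- For `i ≥ 2` and `b₁, …, b_i ∈ k` not all zero, the annihilator of
`s = Σ b_j·y_j` in `S_i` is the ideal `(y₁, …, y_i)`. -/
theorem stmt3 (k : Type) [Field k] [CharZero k] (i : ℕ) (hi : 2 ≤ i)
    (b : Fin i → k) (hb : b ≠ 0) (s : Sring k i)
    (hs : s = ∑ j, algebraMap k (Sring k i) (b j) * yS k i j) :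
    {r : Sring k i | r * s = 0} = ↑(Ideal.span (Set.range (yS k i))) :=
  stmt3_general k i b hb s hs
end
end

section
/- Let i ≥ 2 and let T be a cyclic S_i-module (generated by one element) that is totally reflexive, nonzero, and not free. Then there exist b_1, …, b_i ∈ k such that T is isomorphic as an S_i-module to S_i/(x + b_1·y_1 + ⋯ + b_i·y_i); in particular, every nontrivial cyclic totally reflexive S_i-module arises as the quotient of S_i by a principal ideal generated by an exact zerodivisor. -/
/-!
Write `T ≅ S/I` with `I` the annihilator of a generator. Since `Hom(S/I, S) ≅ ann(I)` via
`φ ↦ φ 1`, reflexivity of `S/I` says that every `S`-linear map `ann(I) → S` is multiplication by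
an element; for `0 ≠ I ≠ S` this fails as soon as `ann(I)` carries a coordinate functional `λ`
that is linear over `S → k` and takes the value `1` on `y_1` or on `x y_1`, because then
`g ↦ λ(g) · x y_2` is such a map. If no element of `I` has an `x`-coordinate, `λ` is the
`y_1`-coordinate. Otherwise `I` contains some `s = x + Σ c_j y_j`, hence the socle `(x y_j)`;
an element of `I` outside `(s)` would put a nonzero `Σ e_j y_j` into `I`, pushing `ann(I)` into
the socle, and `λ` is the `x y_1`-coordinate. So `I = (s)`, and a direct computation gives
`ann(x + Σ b_j y_j) = (x - Σ b_j y_j)`.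
-/

set_option synthInstance.maxHeartbeats 1000000
set_option maxHeartbeats 1000000

open MvPolynomial

noncomputable section

open CategoryTheory in
/-- A module `T` over a commutative ring `R` is totally reflexive if
`Ext^j_R(T, R) = 0` and `Ext^j_R(Hom_R(T,R), R) = 0` for all `j > 0`, and the biduality
map `δ : T → Hom_R(Hom_R(T,R), R)` is an isomorphism. -/
def IsTotallyReflexive (R : Type) [CommRing R]
    (T : Type) [AddCommGroup T] [Module R T] : Prop :=
  (∀ j : ℕ, 0 < j →
    Subsingleton ((((_root_.Ext R (ModuleCat.{0} R) j).obj
      (Opposite.op (ModuleCat.of R T))).obj (ModuleCat.of R R)) : Type)) ∧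
  (∀ j : ℕ, 0 < j →
    Subsingleton ((((_root_.Ext R (ModuleCat.{0} R) j).obj
      (Opposite.op (ModuleCat.of R (Module.Dual R T)))).obj (ModuleCat.of R R)) : Type)) ∧
  Function.Bijective (Module.Dual.eval R T)

namespace Ideal

variable {A B : Type} [CommRing A] [CommRing B]

def HomsOfAnnihilatorAreSMul (I : Ideal A) : Prop :=
  ∀ F : I.annihilator →ₗ[A] A, ∃ t : A, F = t • I.annihilator.subtype

lemma mem_annihilator_iff_mul_eq_zero {I : Ideal A} {g : A} :
    g ∈ I.annihilator ↔ ∀ u ∈ I, g * u = 0 :=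
  Submodule.mem_annihilator

/-- `φ ↦ φ 1` identifies `Hom(A ⧸ I, A)` with `ann(I)`, so a map `ann(I) → A` is an element
of the bidual of `A ⧸ I`; being evaluation at a class `t` means being multiplication by `t`. -/
lemma homsOfAnnihilatorAreSMul_of_surjective_dual_eval (I : Ideal A)
    (h : Function.Surjective (Module.Dual.eval A (A ⧸ I))) : I.HomsOfAnnihilatorAreSMul := by
  intro F
  let evalOne : Module.Dual A (A ⧸ I) →ₗ[A] I.annihilator :=
    LinearMap.codRestrict _ (Module.Dual.eval A (A ⧸ I) (Submodule.Quotient.mk 1)) fun φ => by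
      refine mem_annihilator_iff_mul_eq_zero.2 fun u hu => ?_
      rw [Module.Dual.eval_apply, mul_comm, ← smul_eq_mul, ← map_smul,
        ← Submodule.Quotient.mk_smul, smul_eq_mul, mul_one,
        (Submodule.Quotient.mk_eq_zero I).2 hu, map_zero]
  obtain ⟨q, hq⟩ := h (F ∘ₗ evalOne)
  obtain ⟨t, rfl⟩ := Submodule.Quotient.mk_surjective I q
  refine ⟨t, LinearMap.ext fun g => ?_⟩
  let φ : Module.Dual A (A ⧸ I) := I.liftQ (LinearMap.toSpanSingleton A A g) fun u hu => by
    rw [LinearMap.mem_ker, LinearMap.toSpanSingleton_apply, smul_eq_mul, mul_comm]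
    exact mem_annihilator_iff_mul_eq_zero.1 g.2 u hu
  have hφ : evalOne φ = g := Subtype.ext <| by
    rw [LinearMap.codRestrict_apply, Module.Dual.eval_apply, Submodule.liftQ_apply,
      LinearMap.toSpanSingleton_apply, one_smul]
  have := LinearMap.congr_fun hq φ
  rw [Module.Dual.eval_apply, LinearMap.comp_apply, hφ, Submodule.liftQ_apply,
    LinearMap.toSpanSingleton_apply] at this
  rw [LinearMap.smul_apply, Submodule.subtype_apply, ← this]

lemma apply_mem_annihilator_map_iff (e : A ≃+* B) {I : Ideal A} {g : A} :
    e g ∈ (I.map e).annihilator ↔ g ∈ I.annihilator := by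
  simp only [mem_annihilator_iff_mul_eq_zero, mem_map_of_equiv, forall_exists_index, and_imp,
    forall_apply_eq_imp_iff₂, ← map_mul, map_eq_zero_iff e e.injective]

lemma HomsOfAnnihilatorAreSMul.map (e : A ≃+* B) {I : Ideal A}
    (h : I.HomsOfAnnihilatorAreSMul) : (I.map e).HomsOfAnnihilatorAreSMul := by
  intro F
  let G : I.annihilator →ₗ[A] A :=
    { toFun := fun g => e.symm (F ⟨e g, apply_mem_annihilator_map_iff e |>.2 g.2⟩)
      map_add' := fun g g' => by
        rw [← map_add e.symm, ← map_add F]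
        congr
        simp
      map_smul' := fun r g => by
        rw [RingHom.id_apply, smul_eq_mul, ← e.symm_apply_apply r, ← map_mul e.symm,
          ← smul_eq_mul (e r), ← map_smul F]
        congr
        simp }
  obtain ⟨t, ht⟩ := h G
  refine ⟨e t, LinearMap.ext fun ⟨g, hg⟩ => ?_⟩
  obtain ⟨g, rfl⟩ := e.surjective g
  have := congrArg e (LinearMap.congr_fun ht ⟨g, (apply_mem_annihilator_map_iff e).1 hg⟩)
  simpa [G] using this

lemma eq_span_singleton_of_map_eq (e : A ≃+* B) {I : Ideal A} {s : A}
    (h : I.map e = span {e s}) : I = span {s} := by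
  rw [← comap_map_of_bijective _ e.bijective (I := I), h, ← Set.image_singleton, ← map_span,
    comap_map_of_bijective _ e.bijective]

lemma setOf_mul_eq_zero_eq_span_of_ringEquiv (e : A ≃+* B) {s t : A}
    (h : {z : B | z * e s = 0} = ↑(span {e t})) : {r : A | r * s = 0} = ↑(span {t}) := by
  ext r
  have := Set.ext_iff.1 h (e r)
  rwa [Set.mem_ofPred_eq, ← map_mul, map_eq_zero_iff e e.injective, SetLike.mem_coe,
    ← Set.image_singleton, ← map_span, apply_mem_of_equiv_iff] at this

lemma exists_quotient_of_isReflexive_of_span_singleton_eq_top {R T : Type} [CommRing R]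
    [AddCommGroup T] [Module R T] [Module.IsReflexive R T] [Nontrivial T]
    (hnf : ¬ Module.Free R T) {t₀ : T} (ht₀ : Submodule.span R {t₀} = ⊤) :
    ∃ I : Ideal R, I ≠ ⊥ ∧ I ≠ ⊤ ∧ I.HomsOfAnnihilatorAreSMul ∧
      Nonempty (T ≃ₗ[R] R ⧸ I) := by
  let I := Ideal.torsionOf R T t₀
  let eT : (R ⧸ I) ≃ₗ[R] T :=
    (Ideal.quotTorsionOfEquivSpanSingleton _ _ t₀).trans (LinearEquiv.ofTop _ ht₀)
  have : Module.IsReflexive R (R ⧸ I) := Module.equiv eT.symm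
  refine ⟨I, fun h => hnf (.of_equiv ((Submodule.quotEquivOfEqBot I h).symm.trans eT)),
    Ideal.Quotient.nontrivial_iff.1 eT.symm.injective.nontrivial,
    I.homsOfAnnihilatorAreSMul_of_surjective_dual_eval (Module.bijective_dual_eval _ _).2,
    ⟨eT.symm⟩⟩

end Ideal

/-- Coordinates of `a + b x + Σ c_j y_j + Σ d_j x y_j` in the `k`-basis `1, x, y_j, x y_j`
of `S_i`. -/
@[ext]
structure SModel (k : Type) (i : ℕ) where
  a : k
  b : k
  c : Fin i → k
  d : Fin i → k

namespace SModel

variable {k : Type} [Field k] {i : ℕ}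

instance : Zero (SModel k i) := ⟨⟨0, 0, 0, 0⟩⟩
instance : One (SModel k i) := ⟨⟨1, 0, 0, 0⟩⟩
instance : Add (SModel k i) := ⟨fun p q => ⟨p.a + q.a, p.b + q.b, p.c + q.c, p.d + q.d⟩⟩
instance : Neg (SModel k i) := ⟨fun p => ⟨-p.a, -p.b, -p.c, -p.d⟩⟩
instance : Mul (SModel k i) :=
  ⟨fun p q => ⟨p.a * q.a, p.a * q.b + q.a * p.b, p.a • q.c + q.a • p.c,
    p.a • q.d + q.a • p.d + p.b • q.c + q.b • p.c⟩⟩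

@[simp] lemma zero_a : (0 : SModel k i).a = 0 := rfl
@[simp] lemma zero_b : (0 : SModel k i).b = 0 := rfl
@[simp] lemma zero_c : (0 : SModel k i).c = 0 := rfl
@[simp] lemma zero_d : (0 : SModel k i).d = 0 := rfl
@[simp] lemma one_a : (1 : SModel k i).a = 1 := rfl
@[simp] lemma one_b : (1 : SModel k i).b = 0 := rfl
@[simp] lemma one_c : (1 : SModel k i).c = 0 := rfl
@[simp] lemma one_d : (1 : SModel k i).d = 0 := rfl
@[simp] lemma add_a (p q : SModel k i) : (p + q).a = p.a + q.a := rfl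
@[simp] lemma add_b (p q : SModel k i) : (p + q).b = p.b + q.b := rfl
@[simp] lemma add_c (p q : SModel k i) : (p + q).c = p.c + q.c := rfl
@[simp] lemma add_d (p q : SModel k i) : (p + q).d = p.d + q.d := rfl
@[simp] lemma neg_a (p : SModel k i) : (-p).a = -p.a := rfl
@[simp] lemma neg_b (p : SModel k i) : (-p).b = -p.b := rfl
@[simp] lemma neg_c (p : SModel k i) : (-p).c = -p.c := rfl
@[simp] lemma neg_d (p : SModel k i) : (-p).d = -p.d := rfl
@[simp] lemma mul_a (p q : SModel k i) : (p * q).a = p.a * q.a := rfl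
@[simp] lemma mul_b (p q : SModel k i) : (p * q).b = p.a * q.b + q.a * p.b := rfl
@[simp] lemma mul_c (p q : SModel k i) : (p * q).c = p.a • q.c + q.a • p.c := rfl
@[simp] lemma mul_d (p q : SModel k i) :
    (p * q).d = p.a • q.d + q.a • p.d + p.b • q.c + q.b • p.c := rfl

instance : CommRing (SModel k i) where
  add_assoc _ _ _ := by ext <;> simp [add_assoc]
  zero_add _ := by ext <;> simp
  add_zero _ := by ext <;> simp
  add_comm _ _ := by ext <;> simp [add_comm]
  nsmul := nsmulRec
  zsmul := zsmulRec
  neg_add_cancel _ := by ext <;> simp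
  mul_assoc _ _ _ := by ext <;> simp <;> ring
  one_mul _ := by ext <;> simp
  mul_one _ := by ext <;> simp
  left_distrib _ _ _ := by ext <;> simp <;> ring
  right_distrib _ _ _ := by ext <;> simp <;> ring
  mul_comm _ _ := by ext <;> simp <;> ring
  zero_mul _ := by ext <;> simp
  mul_zero _ := by ext <;> simp

@[simp] lemma sub_a (p q : SModel k i) : (p - q).a = p.a - q.a := by
  rw [sub_eq_add_neg, sub_eq_add_neg]; rfl
@[simp] lemma sub_b (p q : SModel k i) : (p - q).b = p.b - q.b := by
  rw [sub_eq_add_neg, sub_eq_add_neg]; rfl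
@[simp] lemma sub_c (p q : SModel k i) : (p - q).c = p.c - q.c := by
  rw [sub_eq_add_neg, sub_eq_add_neg]; rfl
@[simp] lemma sub_d (p q : SModel k i) : (p - q).d = p.d - q.d := by
  rw [sub_eq_add_neg, sub_eq_add_neg]; rfl

instance : Algebra k (SModel k i) := RingHom.toAlgebra
  { toFun := fun r => ⟨r, 0, 0, 0⟩
    map_one' := rfl
    map_mul' := fun _ _ => by ext <;> simp
    map_zero' := rfl
    map_add' := fun _ _ => by ext <;> simp }

@[simp] lemma algebraMap_apply (r : k) : algebraMap k (SModel k i) r = ⟨r, 0, 0, 0⟩ := rfl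

@[simp] lemma smul_a (r : k) (m : SModel k i) : (r • m).a = r * m.a := by
  simp [Algebra.smul_def]
@[simp] lemma smul_b (r : k) (m : SModel k i) : (r • m).b = r * m.b := by
  simp [Algebra.smul_def]
@[simp] lemma smul_c (r : k) (m : SModel k i) : (r • m).c = r • m.c := by
  simp [Algebra.smul_def]
@[simp] lemma smul_d (r : k) (m : SModel k i) : (r • m).d = r • m.d := by
  simp [Algebra.smul_def]

variable (k i) in
def X : SModel k i := ⟨0, 1, 0, 0⟩

def lin : (Fin i → k) →ₗ[k] SModel k i where
  toFun v := ⟨0, 0, v, 0⟩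
  map_add' _ _ := by ext <;> simp
  map_smul' _ _ := by ext <;> simp

@[simp] lemma X_a : (X k i).a = 0 := rfl
@[simp] lemma X_b : (X k i).b = 1 := rfl
@[simp] lemma X_c : (X k i).c = 0 := rfl
@[simp] lemma X_d : (X k i).d = 0 := rfl
@[simp] lemma lin_a (v : Fin i → k) : (lin v).a = 0 := rfl
@[simp] lemma lin_b (v : Fin i → k) : (lin v).b = 0 := rfl
@[simp] lemma lin_c (v : Fin i → k) : (lin v).c = v := rfl
@[simp] lemma lin_d (v : Fin i → k) : (lin v).d = 0 := rfl

lemma eq_expand (m : SModel k i) :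
    m = algebraMap k _ m.a + m.b • X k i + lin m.c + X k i * lin m.d := by
  ext <;> simp

lemma mul_X (m : SModel k i) : m * X k i = ⟨0, m.a, 0, m.c⟩ := by
  ext <;> simp

lemma mul_lin_single (m : SModel k i) (j : Fin i) :
    m * lin (Pi.single j 1) = ⟨0, 0, Pi.single j m.a, Pi.single j m.b⟩ := by
  ext <;> simp [Pi.single_apply]

lemma isUnit_iff_a_ne_zero {z : SModel k i} : IsUnit z ↔ z.a ≠ 0 := by
  refine ⟨fun h ha => ?_, fun ha => ?_⟩
  · obtain ⟨w, hw⟩ := h.exists_right_inv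
    simpa [ha] using congrArg SModel.a hw
  · set u := z.a⁻¹
    have hu : z.a * u = 1 := mul_inv_cancel₀ ha
    refine .of_mul_eq_one
      ⟨u, -z.b * u ^ 2, -u ^ 2 • z.c, (2 * z.b * u ^ 3) • z.c - u ^ 2 • z.d⟩ ?_
    ext j
    · simpa using hu
    · simp only [mul_b, one_b]
      linear_combination (-(z.b * u)) * hu
    · simp only [mul_c, one_c, Pi.add_apply, Pi.smul_apply, smul_eq_mul, Pi.zero_apply]
      linear_combination (-(z.c j * u)) * hu
    · simp only [mul_d, one_d, Pi.add_apply, Pi.sub_apply, Pi.smul_apply, smul_eq_mul,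
        Pi.zero_apply]
      linear_combination (2 * z.b * z.c j * u ^ 2 - z.d j * u) * hu

lemma a_eq_zero_of_mem {I : Ideal (SModel k i)} (hI : I ≠ ⊤) {z : SModel k i} (hz : z ∈ I) :
    z.a = 0 := by
  by_contra h
  exact hI (I.eq_top_of_isUnit_mem hz (isUnit_iff_a_ne_zero.2 h))

lemma a_eq_zero_of_mem_annihilator {I : Ideal (SModel k i)} (hI : I ≠ ⊥) {g : SModel k i}
    (hg : g ∈ I.annihilator) : g.a = 0 := by
  by_contra h
  refine hI (I.eq_bot_iff.2 fun u hu => ?_)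
  exact (isUnit_iff_a_ne_zero.2 h).mul_right_eq_zero.1
    (Ideal.mem_annihilator_iff_mul_eq_zero.1 hg u hu)

lemma mul_X_mul_lin (r : SModel k i) (v : Fin i → k) :
    r * (X k i * lin v) = X k i * lin (r.a • v) := by
  ext <;> simp

/-- `g ↦ f g · x y_j` is `S_i`-linear since `x y_j` spans a socle line, and it is not
multiplication by any `t`, since `t g₀` has no `x y_j`-component. -/
lemma not_homsOfAnnihilatorAreSMul {I : Ideal (SModel k i)} (f : SModel k i →+ k)
    (hf : ∀ r, ∀ g ∈ I.annihilator, f (r * g) = r.a * f g) {g₀ : SModel k i}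
    (hg₀ : g₀ ∈ I.annihilator) (hfg₀ : f g₀ = 1) {j : Fin i}
    (h₀ : g₀.a = 0 ∧ g₀.b = 0 ∧ g₀.c j = 0 ∧ g₀.d j = 0) :
    ¬ I.HomsOfAnnihilatorAreSMul := by
  intro H
  let F : I.annihilator →ₗ[SModel k i] SModel k i :=
    { toFun := fun g => X k i * lin (Pi.single j (f g))
      map_add' := fun g g' => by ext <;> simp [Pi.single_add]
      map_smul' := fun r g => by
        rw [RingHom.id_apply, smul_eq_mul, mul_X_mul_lin, Submodule.coe_smul, smul_eq_mul,
          hf r g g.2, ← Pi.single_smul', smul_eq_mul] }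
  obtain ⟨t, ht⟩ := H F
  have := congrArg (fun z => z.d j) (LinearMap.congr_fun ht ⟨g₀, hg₀⟩)
  simp [F, hfg₀, h₀] at this

lemma mem_span_X_add_lin_iff {c : Fin i → k} {z : SModel k i} :
    z ∈ Ideal.span {X k i + lin c} ↔ z.a = 0 ∧ z.c = z.b • c := by
  rw [Ideal.mem_span_singleton']
  constructor
  · rintro ⟨r, rfl⟩
    simp
  · rintro ⟨ha, hc⟩
    refine ⟨algebraMap k _ z.b + lin z.d, ?_⟩
    ext <;> simp [ha, hc]

lemma setOf_mul_X_add_lin_eq_zero (b : Fin i → k) :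
    {z : SModel k i | z * (X k i + lin b) = 0} = ↑(Ideal.span {X k i + lin (-b)}) := by
  ext z
  rw [Set.mem_ofPred_eq, SetLike.mem_coe, mem_span_X_add_lin_iff]
  constructor
  · intro h
    have ha : z.a = 0 := by simpa using congrArg SModel.b h
    have hd : z.b • b + z.c = 0 := by simpa [ha] using congrArg SModel.d h
    exact ⟨ha, by rw [smul_neg, eq_neg_iff_add_eq_zero, add_comm, hd]⟩
  · rintro ⟨ha, hc⟩
    ext <;> simp [ha, hc]

variable {I : Ideal (SModel k i)}

lemma exists_mem_b_ne_zero (hi : 1 < i) (hI : I ≠ ⊥) (hIT : I ≠ ⊤)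
    (H : I.HomsOfAnnihilatorAreSMul) : ∃ z ∈ I, z.b ≠ 0 := by
  by_contra! hb
  let j₀ : Fin i := ⟨0, by omega⟩
  let j₁ : Fin i := ⟨1, hi⟩
  have hj : j₁ ≠ j₀ := by simp [j₀, j₁, Fin.ext_iff]
  refine not_homsOfAnnihilatorAreSMul (AddMonoidHom.mk' (fun z => z.c j₀) fun _ _ => rfl)
    (fun r g hg => ?_) (g₀ := lin (Pi.single j₀ 1)) ?_ (by simp) (j := j₁) (by simp [hj]) H
  · simp [a_eq_zero_of_mem_annihilator hI hg]
  · refine Ideal.mem_annihilator_iff_mul_eq_zero.2 fun u hu => ?_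
    ext <;> simp [a_eq_zero_of_mem hIT hu, hb u hu]

lemma c_eq_of_X_add_lin_mem (hi : 1 < i) (hIT : I ≠ ⊤) (H : I.HomsOfAnnihilatorAreSMul)
    {c : Fin i → k} (hs : X k i + lin c ∈ I) {z : SModel k i} (hz : z ∈ I) :
    z.c = z.b • c := by
  by_contra hne
  obtain ⟨j', hj'⟩ := Function.ne_iff.1 hne
  let j₀ : Fin i := ⟨0, by omega⟩
  let j₁ : Fin i := ⟨1, hi⟩
  have hj : j₁ ≠ j₀ := by simp [j₀, j₁, Fin.ext_iff]
  have hsocle : ∀ v, X k i * lin v ∈ I := fun v => by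
    convert I.mul_mem_left (lin v) hs using 1
    ext <;> simp
  have hw : lin (z.c - z.b • c) ∈ I := by
    convert I.sub_mem (I.sub_mem hz (I.mul_mem_left (algebraMap k _ z.b) hs)) (hsocle z.d)
      using 1
    ext <;> simp [a_eq_zero_of_mem hIT hz]
  have hann : ∀ g ∈ I.annihilator, g.a = 0 ∧ g.b = 0 ∧ g.c = 0 := by
    intro g hg
    have hgs := Ideal.mem_annihilator_iff_mul_eq_zero.1 hg _ hs
    have hgw := Ideal.mem_annihilator_iff_mul_eq_zero.1 hg _ hw
    have ha : g.a = 0 := by simpa using congrArg SModel.b hgs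
    have hb : g.b = 0 := by
      have : g.b * (z.c j' - z.b * c j') = 0 := by
        simpa [ha] using congrFun (congrArg SModel.d hgw) j'
      exact (mul_eq_zero.1 this).resolve_right (sub_ne_zero.2 hj')
    refine ⟨ha, hb, ?_⟩
    simpa [ha, hb] using congrArg SModel.d hgs
  refine not_homsOfAnnihilatorAreSMul (AddMonoidHom.mk' (fun z => z.d j₀) fun _ _ => rfl)
    (fun r g hg => ?_) (g₀ := X k i * lin (Pi.single j₀ 1)) ?_ (by simp) (j := j₁)
    (by simp [hj]) H
  · obtain ⟨ha, hb, hc⟩ := hann g hg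
    simp [ha, hb, hc]
  · refine Ideal.mem_annihilator_iff_mul_eq_zero.2 fun u hu => ?_
    ext <;> simp [a_eq_zero_of_mem hIT hu]

theorem exists_eq_span_X_add_lin (hi : 1 < i) (hI : I ≠ ⊥) (hIT : I ≠ ⊤)
    (H : I.HomsOfAnnihilatorAreSMul) : ∃ b, I = Ideal.span {X k i + lin b} := by
  obtain ⟨z, hz, hb⟩ := exists_mem_b_ne_zero hi hI hIT H
  have hza := a_eq_zero_of_mem hIT hz
  have hs : X k i + lin (z.b⁻¹ • z.c) ∈ I := by
    convert I.mul_mem_left (algebraMap k _ z.b⁻¹ * (1 - lin (z.b⁻¹ • z.d))) hz using 1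
    ext j <;> simp [hza, hb]
  refine ⟨_, le_antisymm (fun u hu => ?_) ((Ideal.span_singleton_le_iff_mem I).2 hs)⟩
  exact mem_span_X_add_lin_iff.2 ⟨a_eq_zero_of_mem hIT hu, c_eq_of_X_add_lin_mem hi hIT H hs hu⟩

end SModel

section Sring

variable (k : Type) [Field k] (i : ℕ)

lemma xS_mul_self : xS k i * xS k i = 0 := by
  rw [← map_mul, Ideal.Quotient.eq_zero_iff_mem]
  exact Ideal.subset_span (Or.inl (by rw [Set.mem_singleton_iff, sq]))

lemma yS_mul_yS (a b : Fin i) : yS k i a * yS k i b = 0 := by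
  rw [← map_mul, Ideal.Quotient.eq_zero_iff_mem]
  exact Ideal.subset_span (Or.inr ⟨a, b, rfl⟩)

variable {k i}

def linS (v : Fin i → k) : Sring k i := ∑ j, algebraMap k (Sring k i) (v j) * yS k i j

@[simp] lemma linS_zero : linS (0 : Fin i → k) = 0 := by
  simp [linS]

lemma linS_add (v w : Fin i → k) : linS (v + w) = linS v + linS w := by
  simp [linS, add_mul, Finset.sum_add_distrib]

lemma linS_mul_yS (v : Fin i → k) (j : Fin i) : linS v * yS k i j = 0 := by
  simp [linS, Finset.sum_mul, mul_assoc, yS_mul_yS]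

lemma linS_single (r : k) (j : Fin i) :
    linS (Pi.single j r) = algebraMap k (Sring k i) r * yS k i j := by
  simp [linS, Pi.single_apply, apply_ite, ite_mul]

end Sring

namespace SModel

variable {k : Type} [Field k] {i : ℕ}

variable (k i) in
def var : Fin (i + 1) → SModel k i := Fin.cons (X k i) fun j => lin (Pi.single j 1)

variable (k i) in
def toModel : Sring k i →ₐ[k] SModel k i :=
  Ideal.Quotient.liftₐ _ (MvPolynomial.aeval (var k i)) <| by
    suffices SIdeal k i ≤ RingHom.ker (MvPolynomial.aeval (R := k) (var k i)) from
      fun p hp => this hp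
    rw [Ideal.span_le]
    rintro p (hp | ⟨a, b, rfl⟩)
    · rw [Set.mem_singleton_iff.1 hp]
      ext <;> simp [var, sq]
    · ext <;> simp [var]

lemma toModel_mk (p : MvPolynomial (Fin (i + 1)) k) :
    toModel k i (Ideal.Quotient.mk _ p) = MvPolynomial.aeval (var k i) p := rfl

@[simp] lemma toModel_xS : toModel k i (xS k i) = X k i := by
  simp [toModel_mk, var]

@[simp] lemma toModel_yS (j : Fin i) : toModel k i (yS k i j) = lin (Pi.single j 1) := by
  simp [toModel_mk, var]

@[simp] lemma toModel_linS (v : Fin i → k) : toModel k i (linS v) = lin v := by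
  simp only [linS, map_sum, map_mul, AlgHom.commutes, toModel_yS]
  simp only [← Algebra.smul_def, ← map_smul, ← map_sum]
  congr 1
  ext j
  simp [Pi.single_apply]

variable (k i) in
def ofModel (m : SModel k i) : Sring k i :=
  algebraMap k _ m.a + algebraMap k _ m.b * xS k i + linS m.c + xS k i * linS m.d

lemma toModel_ofModel (m : SModel k i) : toModel k i (ofModel k i m) = m := by
  conv_rhs => rw [eq_expand m]
  simp [ofModel, Algebra.smul_def]

lemma ofModel_add (m m' : SModel k i) : ofModel k i (m + m') = ofModel k i m + ofModel k i m' := by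
  simp only [ofModel, add_a, add_b, add_c, add_d, map_add, linS_add]
  ring

lemma ofModel_mul_X (m : SModel k i) : ofModel k i (m * X k i) = ofModel k i m * xS k i := by
  have hx := xS_mul_self k i
  rw [mul_X]
  dsimp only [ofModel]
  rw [map_zero, linS_zero]
  linear_combination (-algebraMap k _ m.b - linS m.d) * hx

lemma ofModel_mul_lin_single (m : SModel k i) (j : Fin i) :
    ofModel k i (m * lin (Pi.single j 1)) = ofModel k i m * yS k i j := by
  rw [mul_lin_single]
  dsimp only [ofModel]
  rw [map_zero, linS_single, linS_single]
  linear_combination -(linS_mul_yS m.c j) - xS k i * linS_mul_yS m.d j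

lemma ofModel_toModel (r : Sring k i) : ofModel k i (toModel k i r) = r := by
  obtain ⟨p, rfl⟩ := Ideal.Quotient.mk_surjective r
  induction p using MvPolynomial.induction_on with
  | C a =>
    rw [show Ideal.Quotient.mk _ (MvPolynomial.C a) = algebraMap k (Sring k i) a from rfl,
      AlgHom.commutes]
    simp [ofModel]
  | add p q hp hq => rw [map_add, map_add, ofModel_add, hp, hq]
  | mul_X p n hp =>
    cases n using Fin.cases with
    | zero => rw [map_mul, map_mul, toModel_xS, ofModel_mul_X, hp]
    | succ j => rw [map_mul, map_mul, toModel_yS, ofModel_mul_lin_single, hp]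

variable (k i) in
def ringEquiv : Sring k i ≃+* SModel k i where
  __ := toModel k i
  invFun := ofModel k i
  left_inv := ofModel_toModel
  right_inv := toModel_ofModel

@[simp] lemma ringEquiv_apply (r : Sring k i) : ringEquiv k i r = toModel k i r := rfl

lemma ringEquiv_xS_add_sum (b : Fin i → k) :
    ringEquiv k i (xS k i + ∑ j, algebraMap k (Sring k i) (b j) * yS k i j) = X k i + lin b := by
  rw [ringEquiv_apply, map_add, toModel_xS, ← linS, toModel_linS]

lemma not_isUnit_xS_add_sum (b : Fin i → k) :
    ¬ IsUnit (xS k i + ∑ j, algebraMap k (Sring k i) (b j) * yS k i j) := fun h => by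
  have := h.map (ringEquiv k i)
  rw [ringEquiv_xS_add_sum, isUnit_iff_a_ne_zero] at this
  simp at this

lemma setOf_mul_xS_add_sum_eq_zero (b : Fin i → k) :
    {r : Sring k i | r * (xS k i + ∑ j, algebraMap k (Sring k i) (b j) * yS k i j) = 0} =
      ↑(Ideal.span {xS k i + ∑ j, algebraMap k (Sring k i) (-b j) * yS k i j}) := by
  refine Ideal.setOf_mul_eq_zero_eq_span_of_ringEquiv (ringEquiv k i) ?_
  rw [ringEquiv_xS_add_sum, ringEquiv_xS_add_sum]
  exact setOf_mul_X_add_lin_eq_zero b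

lemma exists_eq_span_xS_add_sum (hi : 1 < i) {I : Ideal (Sring k i)} (hI : I ≠ ⊥)
    (hIT : I ≠ ⊤) (H : I.HomsOfAnnihilatorAreSMul) : ∃ b : Fin i → k,
      I = Ideal.span {xS k i + ∑ j, algebraMap k (Sring k i) (b j) * yS k i j} := by
  have hJ : I.map (ringEquiv k i) ≠ ⊥ := by
    rwa [Ne, Ideal.map_eq_bot_iff_of_injective (ringEquiv k i).injective]
  have hJT : I.map (ringEquiv k i) ≠ ⊤ := by
    rw [← Ideal.comap_symm]
    exact Ideal.comap_ne_top _ hIT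
  obtain ⟨b, hb⟩ := exists_eq_span_X_add_lin hi hJ hJT (H.map (ringEquiv k i))
  exact ⟨b, Ideal.eq_span_singleton_of_map_eq _ (by rw [hb, ringEquiv_xS_add_sum])⟩

end SModel

theorem stmt19_general (k : Type) [Field k] (i : ℕ) (hi : 2 ≤ i)
    (T : Type) [AddCommGroup T] [Module (Sring k i) T]
    (hcyc : ∃ t : T, Submodule.span (Sring k i) {t} = ⊤)
    (htr : IsTotallyReflexive (Sring k i) T)
    (hne : Nontrivial T)
    (hnf : ¬ Module.Free (Sring k i) T) :
    ∃ b : Fin i → k,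
      (¬ IsUnit (xS k i + ∑ j, algebraMap k (Sring k i) (b j) * yS k i j) ∧
        ∃ t : Sring k i,
          {r : Sring k i |
              r * (xS k i + ∑ j, algebraMap k (Sring k i) (b j) * yS k i j) = 0} =
            ↑(Ideal.span {t}) ∧
          {r : Sring k i | r * t = 0} =
            ↑(Ideal.span {xS k i + ∑ j, algebraMap k (Sring k i) (b j) * yS k i j})) ∧
      Nonempty (T ≃ₗ[Sring k i]
        (Sring k i ⧸
          Ideal.span {xS k i + ∑ j, algebraMap k (Sring k i) (b j) * yS k i j})) := by
  obtain ⟨t₀, ht₀⟩ := hcyc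
  have : Module.IsReflexive (Sring k i) T := ⟨htr.2.2⟩
  obtain ⟨I, hI, hIT, H, ⟨eT⟩⟩ :=
    Ideal.exists_quotient_of_isReflexive_of_span_singleton_eq_top hnf ht₀
  obtain ⟨b, rfl⟩ := SModel.exists_eq_span_xS_add_sum (by omega) hI hIT H
  refine ⟨b, ⟨SModel.not_isUnit_xS_add_sum b, _, SModel.setOf_mul_xS_add_sum_eq_zero b, ?_⟩,
    ⟨eT⟩⟩
  simpa using SModel.setOf_mul_xS_add_sum_eq_zero (fun j => -b j)

/-- Every nonzero, non-free, cyclic totally reflexive `S_i`-module `T` is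
isomorphic to `S_i/(x + Σ b_j·y_j)` for some `b₁, …, b_i ∈ k`; in particular it is the
quotient of `S_i` by a principal ideal generated by an exact zerodivisor
(the generator `s = x + Σ b_j·y_j` is a non-unit admitting `t` with `ann(s) = tS_i`
and `ann(t) = sS_i`). -/
theorem stmt19 (k : Type) [Field k] [CharZero k] (i : ℕ) (hi : 2 ≤ i)
    (T : Type) [AddCommGroup T] [Module (Sring k i) T] [Module.Finite (Sring k i) T]
    (hcyc : ∃ t : T, Submodule.span (Sring k i) {t} = ⊤)
    (htr : IsTotallyReflexive (Sring k i) T)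
    (hne : Nontrivial T)
    (hnf : ¬ Module.Free (Sring k i) T) :
    ∃ b : Fin i → k,
      (¬ IsUnit (xS k i + ∑ j, algebraMap k (Sring k i) (b j) * yS k i j) ∧
        ∃ t : Sring k i,
          {r : Sring k i |
              r * (xS k i + ∑ j, algebraMap k (Sring k i) (b j) * yS k i j) = 0} =
            ↑(Ideal.span {t}) ∧
          {r : Sring k i | r * t = 0} =
            ↑(Ideal.span {xS k i + ∑ j, algebraMap k (Sring k i) (b j) * yS k i j})) ∧
      Nonempty (T ≃ₗ[Sring k i]
        (Sring k i ⧸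
          Ideal.span {xS k i + ∑ j, algebraMap k (Sring k i) (b j) * yS k i j})) :=
  stmt19_general k i hi T hcyc htr hne hnf
end
end
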